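/- Let f, g be orientation-preserving homeomorphisms of the circle S¹, each with nonempty fixed point set. If Fix(f) ∩ Fix(g) = ∅, then the group ⟨f, g⟩ contains a non-abelian free subgroup. -/

import Mathlib

/-- The circle `S¹ = ℝ/ℤ`. -/
abbrev S1 := AddCircle (1 : ℝ)

/-- `F : ℝ → ℝ` is a lift of `f` through the covering `ℝ → ℝ/ℤ`, witnessing that `f`
is an orientation-preserving homeomorphism of the circle. -/
def IsLiftOf (f : Equiv.Perm S1) (F : ℝ → ℝ) : Prop :=
  StrictMono F ∧ Continuous F ∧ (∀ x : ℝ, F (x + 1) = F x + 1) ∧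
    ∀ x : ℝ, f ((x : ℝ) : S1) = ((F x : ℝ) : S1)

/-- `f` is an orientation-preserving homeomorphism of the circle. -/
def IsPosHomeo (f : Equiv.Perm S1) : Prop := ∃ F, IsLiftOf f F

/-- `ρ` is the translation number of the lift `F`. -/
def HasRotLim (F : ℝ → ℝ) (ρ : ℝ) : Prop :=
  Filter.Tendsto (fun n : ℕ => F^[n] 0 / n) Filter.atTop (nhds ρ)

/-- `G` contains a non-abelian free subgroup (one isomorphic to the free group of rank 2). -/
def HasFreeSubgroup (G : Subgroup (Equiv.Perm S1)) : Prop :=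
  ∃ φ : FreeGroup (Fin 2) →* Equiv.Perm S1, Function.Injective φ ∧ ∀ w, φ w ∈ G

/-!
Once a lift of a circle homeomorphism with fixed points is normalised to have a fixed point, every
orbit of the lift is monotone and bounded, hence converges to a fixed point, and by compactness
this convergence is uniform on closed sets avoiding the fixed points. So all high positive and
negative powers of `f` push a closed neighbourhood of `Fix g` into a neighbourhood `U` of `Fix f`,
and those of `g` push a closed neighbourhood of `Fix f` into a neighbourhood `V` of `Fix g`. With
`U` and `V` disjoint, for large `L` every nonzero power of `f ^ L` maps `V` into `U` and every
nonzero power of `g ^ L` maps `U` into `V`, and ping-pong makes `f ^ L`, `g ^ L` free generators.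
-/

open Set Filter Topology Function Pointwise Metric

section OrderDynamics

variable {α : Type*} [ConditionallyCompleteLinearOrder α] [TopologicalSpace α] [OrderTopology α]
  {F : α → α}

theorem eventually_iterate_mem_of_lt_map (hF : Monotone F) (hc : Continuous F) {x b : α}
    (hx : x < F x) (hxb : x ≤ b) (hb : IsFixedPt F b) {W : Set α} (hW : IsOpen W)
    (hfix : fixedPoints F ⊆ W) :
    ∀ᶠ q : ℕ × α in atTop ×ˢ 𝓝 x, F^[q.1] q.2 ∈ W := by
  have hmono : Monotone fun n => F^[n] x := hF.monotone_iterate_of_le_map hx.le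
  have hbdd : BddAbove (range fun n => F^[n] x) :=
    ⟨b, forall_mem_range.2 fun n => (hF.iterate n hxb).trans_eq (hb.iterate n)⟩
  set p := ⨆ n, F^[n] x
  have hlim : Tendsto (fun n => F^[n] x) atTop (𝓝 p) := tendsto_atTop_ciSup hmono hbdd
  have hp : IsFixedPt F p := isFixedPt_of_tendsto_iterate hlim hc.continuousAt
  have hxp : x < p := hx.trans_le (le_ciSup hbdd 1)
  obtain ⟨q, hqp, hqW⟩ := exists_Ioc_subset_of_mem_nhds (hW.mem_nhds (hfix hp)) ⟨x, hxp⟩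
  obtain ⟨m, hm⟩ := eventually_atTop.1 (hlim.eventually (lt_mem_nhds hqp))
  -- For `y` near `x`, monotonicity squeezes `F^[k + 1] y` between `F^[k] x` and `p`.
  have hN : ∀ᶠ y in 𝓝 x, x < F y ∧ y < p :=
    (hc.tendsto x |>.eventually (lt_mem_nhds hx)).and (gt_mem_nhds hxp)
  filter_upwards [prod_mem_prod (eventually_ge_atTop (m + 1)) hN] with ⟨n, y⟩ ⟨hn, hxy, hyp⟩
  change m + 1 ≤ n at hn
  obtain ⟨k, rfl⟩ : ∃ k, n = k + 1 := ⟨n - 1, by omega⟩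
  refine hqW ⟨(hm k (by omega)).trans_le ?_, ?_⟩
  · rw [iterate_succ_apply]
    exact hF.iterate k hxy.le
  · exact (hF.iterate _ hyp.le).trans_eq (hp.iterate _)

theorem eventually_iterate_mem_of_not_isFixedPt (hF : Monotone F) (hc : Continuous F)
    {a x b : α} (ha : IsFixedPt F a) (hb : IsFixedPt F b) (hax : a ≤ x) (hxb : x ≤ b)
    (hx : ¬IsFixedPt F x) {W : Set α} (hW : IsOpen W) (hfix : fixedPoints F ⊆ W) :
    ∀ᶠ q : ℕ × α in atTop ×ˢ 𝓝 x, F^[q.1] q.2 ∈ W := by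
  rcases lt_or_gt_of_ne hx with h | h
  · -- orbits decreasing to a fixed point are increasing ones for the reversed order
    exact eventually_iterate_mem_of_lt_map (α := αᵒᵈ) hF.dual hc h hax ha hW hfix
  · exact eventually_iterate_mem_of_lt_map hF hc h hxb hb hW hfix

theorem IsCompact.eventually_forall_iterate_mem (hF : Monotone F) (hc : Continuous F) {a b : α}
    (ha : IsFixedPt F a) (hb : IsFixedPt F b) {K : Set α} (hK : IsCompact K)
    (hKab : K ⊆ Icc a b) (hKfix : Disjoint K (fixedPoints F)) {W : Set α} (hW : IsOpen W)
    (hfix : fixedPoints F ⊆ W) : ∀ᶠ n in atTop, ∀ x ∈ K, F^[n] x ∈ W := by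
  have : ∀ᶠ q : ℕ × α in atTop ×ˢ 𝓝ˢ K, F^[q.1] q.2 ∈ W :=
    hK.mem_prod_nhdsSet_of_forall fun x hx =>
      eventually_iterate_mem_of_not_isFixedPt hF hc ha hb (hKab hx).1 (hKab hx).2
        (hKfix.notMem_of_mem_left hx) hW hfix
  exact this.curry.mono fun n hn => hn.self_of_nhdsSet

end OrderDynamics

theorem eventually_zpow_pow_smul_subset {G α : Type*} [Group G] [MulAction G α] {g : G}
    {K W : Set α} (h₁ : ∀ᶠ n : ℕ in atTop, g ^ n • K ⊆ W)
    (h₂ : ∀ᶠ n : ℕ in atTop, g⁻¹ ^ n • K ⊆ W) :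
    ∀ᶠ L : ℕ in atTop, ∀ k : ℤ, k ≠ 0 → (g ^ L) ^ k • K ⊆ W := by
  obtain ⟨N, hN⟩ := eventually_atTop.1 (h₁.and h₂)
  filter_upwards [eventually_ge_atTop N] with L hL k hk
  obtain ⟨m, rfl | rfl⟩ := Int.eq_nat_or_neg k <;>
    have hLm : N ≤ L * m := hL.trans (Nat.le_mul_of_pos_right L (by omega))
  · simpa only [zpow_natCast, ← pow_mul] using (hN _ hLm).1
  · simpa only [zpow_neg, zpow_natCast, ← pow_mul, inv_pow] using (hN _ hLm).2

theorem FreeGroup.injective_lift_of_ping_pong_zpow {ι G α : Type*} [Nontrivial ι] [Group G]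
    [MulAction G α] (a : ι → G) (X : ι → Set α) (hne : ∀ i, (X i).Nonempty)
    (hdisj : Pairwise (Disjoint on X))
    (hpp : Pairwise fun i j => ∀ k : ℤ, k ≠ 0 → a i ^ k • X j ⊆ X i) :
    Injective (FreeGroup.lift a) := by
  -- `FreeGroup ι` is the free product of copies of `FreeGroup Unit ≃ ℤ`.
  have hlift : FreeGroup.lift a =
      (Monoid.CoprodI.lift fun i => FreeGroup.lift fun _ => a i).comp
        (@freeGroupEquivCoprodI ι).toMonoidHom := by
    ext i
    simp
  rw [hlift, MonoidHom.coe_comp]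
  refine Injective.comp ?_ freeGroupEquivCoprodI.injective
  have hcard : 3 ≤ Cardinal.mk (FreeGroup Unit) := by
    rw [FreeGroup.freeGroupUnitEquivInt.cardinal_eq, Cardinal.mk_denumerable]
    exact Cardinal.natCast_le_aleph0
  refine Monoid.CoprodI.lift_injective_of_ping_pong _ (Or.inr ⟨Classical.arbitrary ι, hcard⟩) X
    hne hdisj fun i j hij => FreeGroup.freeGroupUnitEquivInt.symm.forall_congr_right.1 ?_
  intro k hk
  have hk0 : k ≠ 0 := by rintro rfl; exact hk (by simp [FreeGroup.freeGroupUnitEquivInt])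
  simpa [FreeGroup.freeGroupUnitEquivInt] using hpp hij k hk0

theorem FreeGroup.injective_lift_pair_of_ping_pong {G α : Type*} [Group G] [MulAction G α]
    {a b : G} {X Y : Set α} (hX : X.Nonempty) (hY : Y.Nonempty) (hXY : Disjoint X Y)
    (ha : ∀ k : ℤ, k ≠ 0 → a ^ k • Y ⊆ X) (hb : ∀ k : ℤ, k ≠ 0 → b ^ k • X ⊆ Y) :
    Injective (FreeGroup.lift ![a, b]) := by
  refine injective_lift_of_ping_pong_zpow _ ![X, Y] (Fin.forall_fin_two.2 ⟨hX, hY⟩) ?_ ?_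
    <;> intro i j hij <;> fin_cases i <;> fin_cases j <;> simp_all [onFun, hXY.symm]

namespace IsLiftOf

variable {f : Equiv.Perm S1} {F : ℝ → ℝ}

theorem semiconj (h : IsLiftOf f F) : Semiconj ((↑) : ℝ → S1) F f := fun x => (h.2.2.2 x).symm

theorem continuous_perm (h : IsLiftOf f F) : Continuous f := by
  refine QuotientAddGroup.isOpenQuotientMap_mk.continuous_comp_iff.1 ?_
  rw [← h.semiconj.comp_eq]
  exact (AddCircle.continuous_mk' 1).comp h.2.1

theorem surjective (h : IsLiftOf f F) : Surjective F :=
  (CircleDeg1Lift.continuous_iff_surjective ⟨⟨F, h.1.monotone⟩, h.2.2.1⟩).1 h.2.1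

theorem exists_inv (h : IsLiftOf f F) : ∃ G, IsLiftOf f⁻¹ G := by
  let e := h.1.orderIsoOfSurjective F h.surjective
  have hFe : ∀ x, F (e.symm x) = x := e.apply_symm_apply
  refine ⟨e.symm, e.symm.strictMono, e.symm.continuous, fun x => h.1.injective ?_, fun x => ?_⟩
  · rw [h.2.2.1, hFe, hFe]
  · rw [Equiv.Perm.inv_eq_iff_eq, h.2.2.2, hFe]

theorem sub_const (h : IsLiftOf f F) {r : ℝ} (hr : (r : S1) = 0) :
    IsLiftOf f (fun x => F x - r) := by
  obtain ⟨hm, hc, hadd, hf⟩ := h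
  refine ⟨fun x y hxy => sub_lt_sub_right (hm hxy) r, hc.sub continuous_const,
    fun x => by simp only [hadd]; ring, fun x => ?_⟩
  rw [hf, AddCircle.coe_sub, hr, sub_zero]

end IsLiftOf

namespace IsPosHomeo

variable {f : Equiv.Perm S1}

theorem continuous (hf : IsPosHomeo f) : Continuous f :=
  hf.choose_spec.continuous_perm

theorem inv (hf : IsPosHomeo f) : IsPosHomeo f⁻¹ :=
  hf.choose_spec.exists_inv

theorem exists_lift_isFixedPt (hf : IsPosHomeo f) (hfix : (fixedPoints f).Nonempty) :
    ∃ F x, IsLiftOf f F ∧ IsFixedPt F x := by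
  obtain ⟨F, hF⟩ := hf
  obtain ⟨z, hz⟩ := hfix
  obtain ⟨x, rfl⟩ := QuotientAddGroup.mk_surjective z
  have hr : ((F x - x : ℝ) : S1) = 0 := by
    rw [AddCircle.coe_sub, ← hF.2.2.2]
    exact sub_eq_zero.2 hz
  exact ⟨_, x, hF.sub_const hr, sub_sub_cancel (F x) x⟩

theorem eventually_pow_smul_subset (hf : IsPosHomeo f) (hfix : (fixedPoints f).Nonempty)
    {K : Set S1} (hK : IsClosed K) (hKfix : Disjoint K (fixedPoints f)) {W : Set S1}
    (hW : IsOpen W) (hfixW : fixedPoints f ⊆ W) : ∀ᶠ n : ℕ in atTop, (f ^ n) • K ⊆ W := by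
  obtain ⟨F, x₀, hF, hx₀⟩ := hf.exists_lift_isFixedPt hfix
  have hx₁ : IsFixedPt F (x₀ + 1) := by rw [IsFixedPt, hF.2.2.1, hx₀]
  have hmk : Continuous ((↑) : ℝ → S1) := AddCircle.continuous_mk' 1
  have hKfixF : Disjoint ((↑) ⁻¹' K ∩ Icc x₀ (x₀ + 1)) (fixedPoints F) :=
    disjoint_left.2 fun x hx hxF => hKfix.notMem_of_mem_left hx.1 (hxF.map hF.semiconj)
  filter_upwards [(isCompact_Icc.inter_left (hK.preimage hmk)).eventually_forall_iterate_mem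
    hF.1.monotone hF.2.1 hx₀ hx₁ inter_subset_right hKfixF (hW.preimage hmk)
    fun x hx => hfixW (hx.map hF.semiconj)] with n hn
  refine smul_set_subset_iff.2 fun z hz => ?_
  obtain ⟨x, hx, rfl⟩ : z ∈ (↑) '' Icc x₀ (x₀ + 1) :=
    AddCircle.coe_image_Icc_eq 1 x₀ ▸ mem_univ z
  rw [Equiv.Perm.smul_def, ← Equiv.Perm.iterate_eq_pow, ← (hF.semiconj.iterate_right n) x]
  exact hn x ⟨hz, hx⟩

theorem eventually_zpow_pow_smul_subset (hf : IsPosHomeo f) (hfix : (fixedPoints f).Nonempty)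
    {K : Set S1} (hK : IsClosed K) (hKfix : Disjoint K (fixedPoints f)) {W : Set S1}
    (hW : IsOpen W) (hfixW : fixedPoints f ⊆ W) :
    ∀ᶠ L : ℕ in atTop, ∀ k : ℤ, k ≠ 0 → (f ^ L) ^ k • K ⊆ W := by
  have hinv : fixedPoints ⇑f⁻¹ = fixedPoints f := fixedPoints_symm (e := f)
  exact _root_.eventually_zpow_pow_smul_subset
    (hf.eventually_pow_smul_subset hfix hK hKfix hW hfixW)
    (hf.inv.eventually_pow_smul_subset (hinv ▸ hfix) hK (hinv ▸ hKfix) hW (hinv ▸ hfixW))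

end IsPosHomeo

theorem stmt4 (f g : Equiv.Perm S1) (hf : IsPosHomeo f) (hg : IsPosHomeo g)
    (hfixf : {x : S1 | f x = x}.Nonempty) (hfixg : {x : S1 | g x = x}.Nonempty)
    (hdisj : {x : S1 | f x = x} ∩ {x : S1 | g x = x} = ∅) :
    ∃ φ : FreeGroup (Fin 2) →* Equiv.Perm S1,
      Function.Injective φ ∧ ∀ w, φ w ∈ Subgroup.closure {f, g} := by
  obtain ⟨δ, hδ, hsep⟩ := (disjoint_iff_inter_eq_empty.2 hdisj).exists_cthickenings
    (isClosed_fixedPoints hf.continuous).isCompact (isClosed_fixedPoints hg.continuous)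
  have hf_pp := hf.eventually_zpow_pow_smul_subset hfixf isClosed_cthickening
    (hsep.mono_left (self_subset_cthickening _)).symm isOpen_thickening
    (self_subset_thickening hδ _)
  have hg_pp := hg.eventually_zpow_pow_smul_subset hfixg isClosed_cthickening
    (hsep.mono_right (self_subset_cthickening _)) isOpen_thickening
    (self_subset_thickening hδ _)
  obtain ⟨L, hLf, hLg⟩ := (hf_pp.and hg_pp).exists
  refine ⟨FreeGroup.lift ![f ^ L, g ^ L], FreeGroup.injective_lift_pair_of_ping_pong
    (hfixf.mono (self_subset_thickening hδ _)) (hfixg.mono (self_subset_thickening hδ _))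
    (hsep.mono (thickening_subset_cthickening _ _) (thickening_subset_cthickening _ _))
    (fun k hk => (smul_set_mono (thickening_subset_cthickening _ _)).trans (hLf k hk))
    (fun k hk => (smul_set_mono (thickening_subset_cthickening _ _)).trans (hLg k hk)),
    fun w => FreeGroup.range_lift_le ?_ ⟨w, rfl⟩⟩
  rintro _ ⟨i, rfl⟩
  fin_cases i <;> exact pow_mem (Subgroup.subset_closure (by simp)) L
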